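/- arXiv:1704.00255 — 8 statements merged into one kernel-verified Lean document; each statement's English description precedes it below -/
import Mathlib

section
/- For a simplicial complex K on [m] and disjoint subsets σ, ω of [m] with ω nonempty, the restricted link satisfies (K_{σ,ω})° = (K°)_{σ̃,ω}, where σ̃ = [m] \ (σ ∪ ω), the dual on the left is taken relative to ω, and the dual on the right relative to [m]. -/
/-- A (possibly void) abstract simplicial complex: a set of finite subsets
closed under taking subsets. -/
def IsComplex {V : Type*} (K : Set (Finset V)) : Prop :=
  ∀ s ∈ K, ∀ t ⊆ s, t ∈ K

/-- The Alexander dual of `K` relative to the ground set `S`: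
`K° = { S \ σ | σ ⊆ S, σ ∉ K }`. -/
def dualC {V : Type*} [DecidableEq V] (S : Finset V) (K : Set (Finset V)) :
    Set (Finset V) :=
  {t | ∃ s, s ⊆ S ∧ s ∉ K ∧ t = S \ s}


/-- The link of `σ` restricted to `ω`: `K_{σ,ω} = { τ ⊆ ω | σ ∪ τ ∈ K }`. -/
def lkr {V : Type*} [DecidableEq V] (K : Set (Finset V)) (σ ω : Finset V) :
    Set (Finset V) :=
  {τ | τ ⊆ ω ∧ σ ∪ τ ∈ K}

/-- For a simplicial complex `K` on `[m]` and disjoint `σ, ω ⊆ [m]` with `ω`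
nonempty, `(K_{σ,ω})° = (K°)_{σ̃,ω}` where `σ̃ = [m] \ (σ ∪ ω)`, the dual on
the left relative to `ω` and on the right relative to `[m]`. -/
theorem dualC_lkr (m : ℕ) (K : Set (Finset (Fin m))) (hK : IsComplex K)
    (σ ω : Finset (Fin m)) (hd : Disjoint σ ω) (hω : ω.Nonempty) :
    dualC ω (lkr K σ ω)
      = lkr (dualC Finset.univ K) (Finset.univ \ (σ ∪ ω)) ω := by
  ext τ
  simp only [dualC, lkr, Set.mem_setOf_eq]
  constructor
  · rintro ⟨s, hsω, hsK, rfl⟩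
    have hσsK : σ ∪ s ∉ K := fun h => hsK ⟨hsω, h⟩
    refine ⟨Finset.sdiff_subset, σ ∪ s, Finset.subset_univ _, hσsK, ?_⟩
    ext x
    simp only [Finset.mem_union, Finset.mem_sdiff, Finset.mem_univ, true_and]
    have hx : x ∈ s → x ∈ ω := fun h => hsω h
    have hd' : x ∈ σ → x ∉ ω := fun h1 h2 => Finset.disjoint_left.mp hd h1 h2
    tauto
  · rintro ⟨hτω, s, -, hsK, heq⟩
    refine ⟨ω \ τ, Finset.sdiff_subset, ?_, by
      ext x
      simp only [Finset.mem_sdiff]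
      have := @hτω x
      tauto⟩
    rintro ⟨-, hin⟩
    apply hsK
    refine hK _ hin s ?_
    intro x hx
    have hx' : x ∉ Finset.univ \ (σ ∪ ω) ∪ τ := by
      rw [heq]; simp [hx]
    simp only [Finset.mem_union, Finset.mem_sdiff, Finset.mem_univ, true_and,
      not_or, Finset.mem_sdiff] at hx' ⊢
    have := @hτω x
    tauto
end

section
/- The complement of a polyhedral product space is the polyhedral product over the dual complex with complemented pairs: for a simplicial complex K on [m] and topological pairs (X_k, A_k), (X₁ × ⋯ × X_m) \ Z(K; X, A) = Z(K°; X, A^c), where A_k^c = X_k \ A_k and K° is the dual of K relative to [m]. -/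
/-- The polyhedral product `Z(K; X, A) = ⋃_{τ ∈ K} D(τ)` inside `∏ i, α i`,
where `D(τ) = ∏ Y_i` with `Y_i = X i` if `i ∈ τ` and `Y_i = A i` otherwise.
For the void complex it is the empty set. -/
def polyProd {ι : Type*} [DecidableEq ι] {α : ι → Type*} (K : Set (Finset ι))
    (X A : ∀ i, Set (α i)) : Set (∀ i, α i) :=
  ⋃ τ ∈ K, {f | ∀ i, f i ∈ (if i ∈ τ then X i else A i)}

/-- The complement of a polyhedral product space in the full product is the
polyhedral product over the Alexander dual complex with complemented pairs:
`(X₁ × ⋯ × X_m) \ Z(K; X, A) = Z(K°; X, X \ A)`. -/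
theorem compl_polyProd (m : ℕ) (α : Fin m → Type*)
    (K : Set (Finset (Fin m))) (hK : IsComplex K)
    (X A : ∀ k, Set (α k)) (hA : ∀ k, A k ⊆ X k) :
    Set.pi Set.univ X \ polyProd K X A
      = polyProd (dualC Finset.univ K) X (fun k => X k \ A k) := by
  classical
  ext f
  simp only [Set.mem_diff, Set.mem_pi, Set.mem_univ, forall_true_left,
    polyProd, Set.mem_iUnion, dualC, Set.mem_setOf_eq]
  constructor
  · rintro ⟨hX, hnot⟩
    set s : Finset (Fin m) := Finset.univ.filter (fun i => f i ∉ A i) with hs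
    have hsK : s ∉ K := by
      intro h
      exact hnot ⟨s, ⟨h, fun i => by
        by_cases hi : i ∈ s
        · rw [if_pos hi]; exact hX i
        · rw [if_neg hi]
          simp only [hs, Finset.mem_filter, Finset.mem_univ, true_and,
            not_not] at hi
          exact hi⟩⟩
    refine ⟨Finset.univ \ s, ⟨⟨s, Finset.subset_univ _, hsK, rfl⟩, fun i => ?_⟩⟩
    by_cases hi : i ∈ s
    · have : i ∉ Finset.univ \ s := by simp [hi]
      simp only [hs, Finset.mem_filter, Finset.mem_univ, true_and] at hi
      simp [this, hX i, hi]
    · have : i ∈ Finset.univ \ s := by simp [hi]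
      simp [this, hX i]
  · rintro ⟨t, ⟨⟨s, -, hsK, rfl⟩, hf⟩⟩
    have hX : ∀ i, f i ∈ X i := fun i => by
      have := hf i
      split_ifs at this with h
      · exact this
      · exact this.1
    refine ⟨hX, ?_⟩
    rintro ⟨τ, ⟨hτK, hτ⟩⟩
    refine hsK (hK τ hτK s (fun i hi => ?_))
    have hi' : i ∉ Finset.univ \ s := by simp [hi]
    have hthis := hf i
    rw [if_neg hi'] at hthis
    by_contra hiτ
    have h2 := hτ i
    rw [if_neg hiτ] at h2
    exact hthis.2 h2
end

section
/- If S = { k ∈ [m] | A_k = ∅ }, then Z(K; X, A) = Z(link_K S; X', A') × ∏_{k ∈ S} X_k, where (X', A') is the subsequence of pairs indexed by [m] \ S; in particular, if S ∉ K then Z(K; X, A) = ∅. -/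
/-- If `S = { k | A k = ∅ }`, then `Z(K; X, A)` equals, under the obvious
identification, `Z(link_K S; X', A') × ∏_{k ∈ S} X k` where `(X', A')` is the
subsequence of pairs indexed by the complement of `S`; in particular if
`S ∉ K` then `Z(K; X, A) = ∅`. -/
theorem polyProd_empty_factors (m : ℕ) (α : Fin m → Type*)
    (K : Set (Finset (Fin m))) (hK : IsComplex K)
    (X A : ∀ k, Set (α k)) (hA : ∀ k, A k ⊆ X k)
    (S : Finset (Fin m)) (hS : ∀ k, k ∈ S ↔ A k = ∅) :
    (polyProd K X A =
      {f | (fun k : {k // k ∉ S} => f k.1) ∈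
            polyProd
              {τ : Finset {k // k ∉ S} |
                S ∪ τ.map (Function.Embedding.subtype _) ∈ K}
              (fun k => X k.1) (fun k => A k.1)
          ∧ ∀ k ∈ S, f k ∈ X k}) ∧
    (S ∉ K → polyProd K X A = ∅) := by

  constructor
  · ext f
    simp only [polyProd, Set.mem_iUnion, Set.mem_setOf_eq]
    constructor
    · rintro ⟨τ, hτ, hf⟩
      have hSτ : S ⊆ τ := by
        intro k hk
        by_contra hkτ
        have := hf k
        rw [if_neg hkτ, (hS k).1 hk] at this
        exact this
      refine ⟨⟨τ.subtype (· ∉ S), ?_, ?_⟩, ?_⟩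
      · show S ∪ _ ∈ K
        rw [Finset.subtype_map]
        have h2 : S ∪ τ.filter (· ∉ S) = τ := by
          ext i
          simp only [Finset.mem_union, Finset.mem_filter]
          constructor
          · rintro (h | ⟨h, _⟩)
            · exact hSτ h
            · exact h
          · intro h
            by_cases hi : i ∈ S
            · exact Or.inl hi
            · exact Or.inr ⟨h, hi⟩
        rwa [h2]
      · intro k
        have := hf k.1
        by_cases hk : k.1 ∈ τ
        · rw [if_pos hk] at this
          rwa [if_pos (Finset.mem_subtype.2 hk)]
        · rw [if_neg hk] at this
          rwa [if_neg (fun h => hk (Finset.mem_subtype.1 h))]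
      · intro k hk
        have := hf k
        rwa [if_pos (hSτ hk)] at this
    · rintro ⟨⟨τ', hτ', hf'⟩, hfS⟩
      refine ⟨S ∪ τ'.map (Function.Embedding.subtype _), hτ', fun i => ?_⟩
      by_cases hi : i ∈ S
      · rw [if_pos (Finset.mem_union_left _ hi)]
        exact hfS i hi
      · have := hf' ⟨i, hi⟩
        by_cases hi' : (⟨i, hi⟩ : {k // k ∉ S}) ∈ τ'
        · rw [if_pos hi'] at this
          have hm : i ∈ S ∪ τ'.map (Function.Embedding.subtype _) :=
            Finset.mem_union_right _ (Finset.mem_map.2 ⟨⟨i, hi⟩, hi', rfl⟩)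
          rw [if_pos hm]
          exact this
        · rw [if_neg hi'] at this
          rw [if_neg]
          · exact this
          · intro h
            rcases Finset.mem_union.1 h with h | h
            · exact hi h
            · rcases Finset.mem_map.1 h with ⟨j, hj, hji⟩
              apply hi'
              have hje : j = ⟨i, hi⟩ := Subtype.ext hji
              rwa [hje] at hj
  · intro hSK
    ext f
    simp only [polyProd, Set.mem_iUnion, Set.mem_setOf_eq, Set.mem_empty_iff_false, iff_false]
    rintro ⟨τ, hτ, hf⟩
    apply hSK
    refine hK τ hτ S fun k hk => ?_
    by_contra hkτ
    have := hf k
    rw [if_neg hkτ, (hS k).1 hk] at this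
    exact this
end

section
/- Composition of polyhedral products: if (Y_k, B_k) = (Z(X_k; U_k, C_k), Z(A_k; U_k, C_k)) where (X_k, A_k) is a simplicial pair on [n_k] and (U_i, C_i) are set pairs, then Z(K; Y, B) = Z(S(K; X, A); U, C) as subsets of U₁ × ⋯ × U_n, where n = n₁ + ⋯ + n_m. -/
/-- The block of a simplex `σ` on the disjoint union `Σ k, V k` corresponding to
the vertex block `V k` (i.e. `σ ∩ [n_k]`). -/
noncomputable def blk {m : ℕ} {V : Fin m → Type*} [∀ k, DecidableEq (V k)]
    (σ : Finset (Σ k, V k)) (k : Fin m) : Finset (V k) :=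
  σ.preimage (Sigma.mk k) (sigma_mk_injective.injOn)

/-- The join-union `Y₁ * ⋯ * Y_m = { σ | σ ∩ [n_k] ∈ Y k for all k }` of
complexes on the disjoint vertex blocks `V k`. -/
def joinC {m : ℕ} {V : Fin m → Type*} [∀ k, DecidableEq (V k)]
    (Y : ∀ k, Set (Finset (V k))) : Set (Finset (Σ k, V k)) :=
  {σ | ∀ k, blk σ k ∈ Y k}

/-- The polyhedral product complex `S(K; X, A) = ⋃_{τ ∈ K} V₁^τ * ⋯ * V_m^τ`
with `V_k^τ = X k` if `k ∈ τ` and `A k` otherwise. -/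
def compC {m : ℕ} {V : Fin m → Type*} [∀ k, DecidableEq (V k)]
    (K : Set (Finset (Fin m))) (X A : ∀ k, Set (Finset (V k))) :
    Set (Finset (Σ k, V k)) :=
  ⋃ τ ∈ K, joinC (fun k => if k ∈ τ then X k else A k)


/-- Composition of polyhedral products: if
`(Y k, B k) = (Z(X k; U, C), Z(A k; U, C))` for a simplicial pair `(X k, A k)`
on the `k`-th vertex block, then `Z(K; Y, B) = Z(S(K; X, A); U, C)` under the
canonical identification of `∏_i U_i` with `∏_k ∏_{i ∈ block k} U_i`. -/
theorem polyProd_compC (m : ℕ) (V : Fin m → Type*) [∀ k, DecidableEq (V k)]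
    (β : (Σ k, V k) → Type*)
    (K : Set (Finset (Fin m))) (hK : IsComplex K)
    (X A : ∀ k, Set (Finset (V k)))
    (hX : ∀ k, IsComplex (X k)) (hA : ∀ k, A k ⊆ X k)
    (U C : ∀ i : Σ k, V k, Set (β i)) :
    polyProd (compC K X A) U C
      = {f | (fun k => fun i => f ⟨k, i⟩) ∈
          polyProd K
            (fun k => polyProd (X k) (fun i => U ⟨k, i⟩) (fun i => C ⟨k, i⟩))
            (fun k => polyProd (A k) (fun i => U ⟨k, i⟩) (fun i => C ⟨k, i⟩))} := by
  ext f
  simp only [polyProd, compC, Set.mem_iUnion, Set.mem_setOf_eq]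
  constructor
  · rintro ⟨σ, ⟨τ, hτ, hσ⟩, hf⟩
    refine ⟨τ, hτ, fun k => ?_⟩
    have hk : blk σ k ∈ (if k ∈ τ then X k else A k) := hσ k
    have key : ∀ i, f ⟨k, i⟩ ∈ (if i ∈ blk σ k then U ⟨k, i⟩ else C ⟨k, i⟩) := by
      intro i
      have h := hf ⟨k, i⟩
      have hiff : i ∈ blk σ k ↔ (⟨k, i⟩ : Σ k, V k) ∈ σ := by
        simp [blk, Finset.mem_preimage]
      by_cases hi : (⟨k, i⟩ : Σ k, V k) ∈ σ <;> simp [hi, hiff] at h ⊢ <;> exact h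
    by_cases hkτ : k ∈ τ <;> simp only [hkτ, if_true, if_false] at hk ⊢ <;>
      exact Set.mem_iUnion.2 ⟨blk σ k, Set.mem_iUnion.2 ⟨hk, key⟩⟩
  · rintro ⟨τ, hτ, h⟩
    have h' : ∀ k, ∃ s ∈ (if k ∈ τ then X k else A k),
        ∀ i, f ⟨k, i⟩ ∈ (if i ∈ s then U ⟨k, i⟩ else C ⟨k, i⟩) := by
      intro k
      have hk := h k
      by_cases hkτ : k ∈ τ <;> simp only [hkτ, if_true, if_false,
        Set.mem_iUnion, Set.mem_setOf_eq] at hk ⊢ <;>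
        · obtain ⟨s, hs, hp⟩ := hk; exact ⟨s, hs, hp⟩
    choose s hs hfs using h'
    refine ⟨Finset.univ.sigma s, ⟨τ, hτ, fun k => ?_⟩, fun i => ?_⟩
    · have : blk (Finset.univ.sigma s) k = s k := by
        ext i; simp [blk, Finset.mem_preimage, Finset.mem_sigma]
      rw [this]; exact hs k
    · obtain ⟨k, i⟩ := i
      have hmem : (⟨k, i⟩ : Σ k, V k) ∈ Finset.univ.sigma s ↔ i ∈ s k := by
        simp [Finset.mem_sigma]
      have := hfs k i
      by_cases hi : i ∈ s k <;> simp [hi, hmem] at this ⊢ <;> exact this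
end

section
/- The restricted link of a polyhedral product complex is the polyhedral product complex of the restricted links: for disjoint σ, ω ⊆ [n], S(K; X, A)_{σ,ω} = S(K; X_{σ,ω}, A_{σ,ω}), where (X_{σ,ω}, A_{σ,ω}) = { ((X_k)_{σ_k,ω_k}, (A_k)_{σ_k,ω_k}) } with σ_k = σ ∩ [n_k], ω_k = ω ∩ [n_k]. -/
/-- The restricted link of a polyhedral product complex is the polyhedral
product complex of the restricted links:
`S(K; X, A)_{σ,ω} = S(K; X_{σ,ω}, A_{σ,ω})` with blockwise restrictions. -/
theorem lkr_compC (m : ℕ) (V : Fin m → Type*) [∀ k, DecidableEq (V k)]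
    (K : Set (Finset (Fin m))) (hK : IsComplex K)
    (X A : ∀ k, Set (Finset (V k)))
    (hX : ∀ k, IsComplex (X k)) (hA : ∀ k, A k ⊆ X k)
    (σ ω : Finset (Σ k, V k)) (hd : Disjoint σ ω) :
    lkr (compC K X A) σ ω
      = compC K (fun k => lkr (X k) (blk σ k) (blk ω k))
                (fun k => lkr (A k) (blk σ k) (blk ω k)) := by
  have blk_union : ∀ (a b : Finset (Σ k, V k)) (k : Fin m),
      blk (a ∪ b) k = blk a k ∪ blk b k := by
    intro a b k
    ext v
    simp only [blk, Finset.mem_preimage, Finset.mem_union]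
  have subset_iff : ∀ (a b : Finset (Σ k, V k)),
      a ⊆ b ↔ ∀ k, blk a k ⊆ blk b k := by
    intro a b
    constructor
    · intro h k v hv
      simp only [blk, Finset.mem_preimage] at hv ⊢
      exact h hv
    · rintro h ⟨k, v⟩ hv
      have := h k (by simpa [blk, Finset.mem_preimage] using hv)
      simpa [blk, Finset.mem_preimage] using this
  ext τ
  simp only [lkr, compC, Set.mem_setOf_eq, Set.mem_iUnion, joinC]
  constructor
  · rintro ⟨hτω, κ, hκ, hall⟩
    refine ⟨κ, hκ, fun k => ?_⟩
    have h := hall k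
    rw [blk_union] at h
    by_cases hk : k ∈ κ <;> simp only [hk, if_true, if_false] at h ⊢ <;>
      exact ⟨((subset_iff τ ω).1 hτω k), h⟩
  · rintro ⟨κ, hκ, hall⟩
    have hτω : τ ⊆ ω := by
      rw [subset_iff]
      intro k
      have h := hall k
      by_cases hk : k ∈ κ <;> simp only [hk, if_true, if_false] at h <;> exact h.1
    refine ⟨hτω, κ, hκ, fun k => ?_⟩
    have h := hall k
    rw [blk_union]
    by_cases hk : k ∈ κ <;> simp only [hk, if_true, if_false] at h ⊢ <;> exact h.2
end

section
/- Duality of composition complexes: S(K; L₁, …, L_m)° = S(K°; L₁°, …, L_m°), where the dual on the left is relative to [n] with n = n₁ + ⋯ + n_m, K° is relative to [m], and L_k° is relative to [n_k]. -/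
/-- The blockwise join-union of complexes `Y k` on pairwise disjoint vertex
blocks `B k ⊆ ℕ`: `{ σ ⊆ [n] | σ ∩ B k ∈ Y k for all k }`. -/
def joinU {m : ℕ} (B : Fin m → Finset ℕ) (Y : Fin m → Set (Finset ℕ)) :
    Set (Finset ℕ) :=
  {σ | σ ⊆ Finset.univ.biUnion B ∧ ∀ k, σ ∩ B k ∈ Y k}

/-- The polyhedral product complex `S(K; X, A) = ⋃_{τ ∈ K} V₁^τ * ⋯ * V_m^τ`
on blocks `B k`, with `V_k^τ = X k` if `k ∈ τ` and `A k` otherwise. -/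
def compU {m : ℕ} (B : Fin m → Finset ℕ) (K : Set (Finset (Fin m)))
    (X A : Fin m → Set (Finset ℕ)) : Set (Finset ℕ) :=
  ⋃ τ ∈ K, joinU B (fun k => if k ∈ τ then X k else A k)

/-- The full simplex on a finite vertex set `T`. -/
def fullOn (T : Finset ℕ) : Set (Finset ℕ) := {s | s ⊆ T}

/-- Duality of composition complexes:
`S(K; L₁, …, L_m)° = S(K°; L₁°, …, L_m°)`, where the dual on the left is
relative to `[n]` (the union of the blocks), `K°` is relative to `[m]`, and
`L_k°` is relative to the `k`-th block. -/
theorem dualC_compU (m : ℕ) (B : Fin m → Finset ℕ)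
    (hBd : ∀ k l, k ≠ l → Disjoint (B k) (B l)) (hBne : ∀ k, (B k).Nonempty)
    (K : Set (Finset (Fin m))) (hK : IsComplex K)
    (L : Fin m → Set (Finset ℕ)) (hL : ∀ k, IsComplex (L k))
    (hLv : ∀ k, ∀ s ∈ L k, s ⊆ B k) :
    dualC (Finset.univ.biUnion B) (compU B K (fun k => fullOn (B k)) L)
      = compU B (dualC Finset.univ K) (fun k => fullOn (B k))
          (fun k => dualC (B k) (L k)) := by
  classical
  set N := Finset.univ.biUnion B with hNdef
  have hBN : ∀ k, B k ⊆ N := fun k => Finset.subset_biUnion_of_mem B (Finset.mem_univ k)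
  -- `B k \ t` equals `(N \ t) ∩ B k`
  have hblk : ∀ (t : Finset ℕ) (k : Fin m), (N \ t) ∩ B k = B k \ t := by
    intro t k
    ext x
    simp only [Finset.mem_inter, Finset.mem_sdiff]
    exact ⟨fun h => ⟨h.2, h.1.2⟩, fun h => ⟨⟨hBN k h.1, h.2⟩, h.1⟩⟩
  -- characterization of LHS
  have hL1 : ∀ t : Finset ℕ,
      t ∈ dualC N (compU B K (fun k => fullOn (B k)) L) ↔
      t ⊆ N ∧ (Finset.univ.filter (fun k => B k \ t ∉ L k) : Finset (Fin m)) ∉ K := by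
    intro t
    constructor
    · rintro ⟨s, hsN, hs, rfl⟩
      refine ⟨Finset.sdiff_subset, fun hmemK => hs ?_⟩
      simp only [compU, Set.mem_iUnion]
      refine ⟨_, hmemK, hsN, fun k => ?_⟩
      by_cases hk : k ∈ Finset.univ.filter (fun k => B k \ (N \ s) ∉ L k)
      · simp only [if_pos hk, fullOn, Set.mem_setOf_eq]
        exact Finset.inter_subset_right
      · simp only [if_neg hk]
        simp only [Finset.mem_filter, Finset.mem_univ, true_and, not_not] at hk
        have heq : s ∩ B k = B k \ (N \ s) := by
          ext x
          simp only [Finset.mem_inter, Finset.mem_sdiff, not_and, not_not]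
          exact ⟨fun h => ⟨h.2, fun _ => h.1⟩, fun h => ⟨h.2 (hBN k h.1), h.1⟩⟩
        rw [heq]; exact hk
    · rintro ⟨htN, hfilt⟩
      refine ⟨N \ t, Finset.sdiff_subset, ?_, (Finset.sdiff_sdiff_eq_self htN).symm⟩
      intro hmem
      simp only [compU, Set.mem_iUnion] at hmem
      obtain ⟨τ, hτK, _, hall⟩ := hmem
      apply hfilt
      apply hK τ hτK
      intro k hk
      simp only [Finset.mem_filter, Finset.mem_univ, true_and] at hk
      by_contra hkτ
      have := hall k
      simp only [if_neg hkτ, hblk t k] at this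
      exact hk this
  -- characterization of RHS
  have hR1 : ∀ t : Finset ℕ,
      t ∈ compU B (dualC Finset.univ K) (fun k => fullOn (B k))
        (fun k => dualC (B k) (L k)) ↔
      t ⊆ N ∧ (Finset.univ.filter (fun k => B k \ t ∉ L k) : Finset (Fin m)) ∉ K := by
    intro t
    simp only [compU, Set.mem_iUnion]
    constructor
    · rintro ⟨τ, ⟨ρ, -, hρK, rfl⟩, htN, hall⟩
      refine ⟨htN, fun hfilt => hρK (hK _ hfilt ρ ?_)⟩
      intro k hkρ
      simp only [Finset.mem_filter, Finset.mem_univ, true_and]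
      have hkτ : k ∉ Finset.univ \ ρ := by simp [hkρ]
      have := hall k
      simp only [if_neg hkτ] at this
      obtain ⟨s', hs'B, hs'L, heq⟩ := this
      have : B k \ t = s' := by
        have h1 : B k \ t = B k \ (t ∩ B k) := by
          ext x
          simp only [Finset.mem_sdiff, Finset.mem_inter]
          tauto
        rw [h1, heq, Finset.sdiff_sdiff_eq_self hs'B]
      rw [this]; exact hs'L
    · rintro ⟨htN, hfilt⟩
      refine ⟨Finset.univ \ Finset.univ.filter (fun k => B k \ t ∉ L k),
        ⟨_, Finset.subset_univ _, hfilt, rfl⟩, htN, fun k => ?_⟩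
      by_cases hk : k ∈ Finset.univ \ Finset.univ.filter (fun k => B k \ t ∉ L k)
      · simp only [if_pos hk, fullOn, Set.mem_setOf_eq]
        exact Finset.inter_subset_right
      · simp only [if_neg hk]
        simp only [Finset.mem_sdiff, Finset.mem_univ, true_and, Finset.mem_filter,
          not_not] at hk
        refine ⟨B k \ t, Finset.sdiff_subset, hk, ?_⟩
        ext x
        simp only [Finset.mem_inter, Finset.mem_sdiff, not_and, not_not]
        tauto
  ext t
  rw [hL1, hR1]
end

section
/- If K and all L_k are self-dual relative to their vertex sets, then the composition complex S(K; L₁, …, L_m) is self-dual relative to [n]. -/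
/-- Self-duality characterization: for t ⊆ S, t ∈ K ↔ S \ t ∉ K. -/
lemma selfDual_char {V : Type*} [DecidableEq V] (S : Finset V) (K : Set (Finset V))
    (h : dualC S K = K) {t : Finset V} (ht : t ⊆ S) : t ∈ K ↔ S \ t ∉ K := by
  constructor
  · intro htK
    rw [← h] at htK
    obtain ⟨s, hsS, hsK, rfl⟩ := htK
    rwa [sdiff_sdiff_eq_self hsS]
  · intro hc
    rw [← h]
    exact ⟨S \ t, Finset.sdiff_subset, hc, (sdiff_sdiff_eq_self ht).symm⟩

/-- If `K` and all the `L k` are self-dual relative to their vertex sets, then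
the composition complex `S(K; L₁, …, L_m)` is self-dual relative to `[n]`. -/
theorem selfDual_compU (m : ℕ) (B : Fin m → Finset ℕ)
    (hBd : ∀ k l, k ≠ l → Disjoint (B k) (B l)) (hBne : ∀ k, (B k).Nonempty)
    (K : Set (Finset (Fin m))) (hK : IsComplex K)
    (L : Fin m → Set (Finset ℕ)) (hL : ∀ k, IsComplex (L k))
    (hLv : ∀ k, ∀ s ∈ L k, s ⊆ B k)
    (hKsd : dualC Finset.univ K = K) (hLsd : ∀ k, dualC (B k) (L k) = L k) :
    dualC (Finset.univ.biUnion B) (compU B K (fun k => fullOn (B k)) L)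
      = compU B K (fun k => fullOn (B k)) L := by
  classical
  set T := Finset.univ.biUnion B with hTdef
  have hBT : ∀ k, B k ⊆ T := fun k => Finset.subset_biUnion_of_mem B (Finset.mem_univ k)
  -- the characteristic filter
  set F : Finset ℕ → Finset (Fin m) :=
    fun σ => Finset.univ.filter (fun k => σ ∩ B k ∉ L k) with hFdef
  -- membership characterization of the composition complex
  have hS : ∀ σ, σ ∈ compU B K (fun k => fullOn (B k)) L ↔ σ ⊆ T ∧ F σ ∈ K := by
    intro σ
    simp only [compU, Set.mem_iUnion, joinU, Set.mem_setOf_eq]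
    constructor
    · rintro ⟨τ, hτ, hσT, hall⟩
      refine ⟨hσT, hK τ hτ _ ?_⟩
      intro k hk
      rw [hFdef, Finset.mem_filter] at hk
      by_contra hkτ
      have := hall k
      rw [if_neg hkτ] at this
      exact hk.2 this
    · rintro ⟨hσT, hfK⟩
      refine ⟨F σ, hfK, hσT, fun k => ?_⟩
      by_cases hk : k ∈ F σ
      · rw [if_pos hk]; exact Finset.inter_subset_right
      · rw [if_neg hk]
        rw [hFdef, Finset.mem_filter] at hk
        push_neg at hk
        exact hk (Finset.mem_univ k)
  -- complementation flips the filter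
  have hflip : ∀ σ, σ ⊆ T → F (T \ σ) = Finset.univ \ F σ := by
    intro σ hσT
    ext k
    have hcap : (T \ σ) ∩ B k = B k \ (σ ∩ B k) := by
      ext x
      simp only [Finset.mem_inter, Finset.mem_sdiff]
      constructor
      · rintro ⟨⟨hxT, hxσ⟩, hxB⟩
        exact ⟨hxB, fun h => hxσ h.1⟩
      · rintro ⟨hxB, hx⟩
        exact ⟨⟨hBT k hxB, fun h => hx ⟨h, hxB⟩⟩, hxB⟩
    have hchar := selfDual_char (B k) (L k) (hLsd k)
      (t := σ ∩ B k) Finset.inter_subset_right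
    simp only [hFdef, Finset.mem_filter, Finset.mem_sdiff, Finset.mem_univ, true_and,
      hcap]
    rw [not_not]
    exact hchar.symm
  have hKc : ∀ τ : Finset (Fin m), τ ∈ K ↔ Finset.univ \ τ ∉ K :=
    fun τ => selfDual_char Finset.univ K hKsd (Finset.subset_univ τ)
  ext σ
  constructor
  · rintro ⟨s, hsT, hsS, rfl⟩
    rw [hS] at hsS ⊢
    push_neg at hsS
    refine ⟨Finset.sdiff_subset, ?_⟩
    rw [hflip s hsT]
    rw [hKc, sdiff_sdiff_eq_self (Finset.subset_univ _)]
    exact hsS hsT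
  · intro hσ
    rw [hS] at hσ
    obtain ⟨hσT, hσK⟩ := hσ
    refine ⟨T \ σ, Finset.sdiff_subset, ?_, (sdiff_sdiff_eq_self hσT).symm⟩
    rw [hS]
    rintro ⟨-, hk⟩
    rw [hflip σ hσT] at hk
    exact (hKc _).mp hσK hk
end

section
/- Combinatorial Alexander duality with links: for a simplicial complex K on [m] and disjoint σ, ω ⊆ [m] with ω ≠ ∅, there is an isomorphism H̃_{p-1}(K_{σ,ω}) ≅ H̃^{|ω|-p-2}((K°)_{σ̃,ω}) for all p, where σ̃ = [m] \ (σ ∪ ω). -/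
/-- The group of (shifted-degree) reduced simplicial chains of `K` in degree
`n`: the free abelian group on the simplices of `K` of cardinality `n`
(so the empty simplex sits in degree `0`). -/
abbrev chainsOf {V : Type*} (K : Set (Finset V)) (n : ℕ) : Type _ :=
  {s : Finset V // s ∈ K ∧ s.card = n} →₀ ℤ

open Finset Classical in
/-- The simplicial boundary map. -/
noncomputable def bdry {V : Type*} [LinearOrder V] (K : Set (Finset V))
    (n : ℕ) : chainsOf K (n + 1) →ₗ[ℤ] chainsOf K n :=
  Finsupp.lsum ℤ fun s =>
    ∑ i ∈ s.1.attach,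
      if h : s.1.erase i.1 ∈ K then
        ((-1 : ℤ) ^ ((s.1.filter fun x => x < i.1)).card) •
          Finsupp.lsingle
            ⟨s.1.erase i.1, h, by
              rw [Finset.card_erase_of_mem i.2, s.2.2]; rfl⟩
      else 0

/-- Reduced cycles (everything in degree 0 is a cycle). -/
noncomputable def cyc {V : Type*} [LinearOrder V] (K : Set (Finset V)) :
    ∀ n : ℕ, Submodule ℤ (chainsOf K n)
  | 0 => ⊤
  | n + 1 => LinearMap.ker (bdry K n)

/-- The (shifted) reduced simplicial homology group of `K`:
`Hgrp K n ≅ H̃_{n-1}(K)`. -/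
abbrev Hgrp {V : Type*} [LinearOrder V] (K : Set (Finset V)) (n : ℕ) :
    Type _ :=
  cyc K n ⧸ Submodule.comap (cyc K n).subtype (LinearMap.range (bdry K n))

open Finset Classical in
/-- The simplicial coboundary map (the transpose of the boundary map). -/
noncomputable def cobdry {V : Type*} [LinearOrder V] [Fintype V]
    (K : Set (Finset V)) (n : ℕ) : chainsOf K n →ₗ[ℤ] chainsOf K (n + 1) :=
  Finsupp.lsum ℤ fun s =>
    ∑ v ∈ (Finset.univ \ s.1).attach,
      if h : insert v.1 s.1 ∈ K then
        ((-1 : ℤ) ^ ((s.1.filter fun x => x < v.1)).card) •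
          Finsupp.lsingle
            ⟨insert v.1 s.1, h, by
              rw [Finset.card_insert_of_notMem (Finset.mem_sdiff.1 v.2).2,
                s.2.2]⟩
      else 0

/-- Coboundaries (nothing in degree 0 is a coboundary). -/
noncomputable def cobnd {V : Type*} [LinearOrder V] [Fintype V]
    (K : Set (Finset V)) : ∀ n : ℕ, Submodule ℤ (chainsOf K n)
  | 0 => ⊥
  | n + 1 => LinearMap.range (cobdry K n)

/-- The (shifted) reduced simplicial cohomology group of `K`:
`coHgrp K n ≅ H̃^{n-1}(K)`. -/
abbrev coHgrp {V : Type*} [LinearOrder V] [Fintype V] (K : Set (Finset V))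
    (n : ℕ) : Type _ :=
  LinearMap.ker (cobdry K n) ⧸
    Submodule.comap (LinearMap.ker (cobdry K n)).subtype (cobnd K n)

namespace AD
open Finset

variable {V : Type*} [LinearOrder V]

/-- sign of removing/inserting `i` relative to `s`. -/
def sgn (s : Finset V) (i : V) : ℤ :=
  (-1 : ℤ) ^ ((s.filter fun x => x < i)).card

open Classical in
/-- basis vector: the single on `s` if it is a legitimate `n`-simplex of `X`, else `0`. -/
noncomputable def bv (X : Set (Finset V)) (n : ℕ) (s : Finset V) :
    chainsOf X n :=
  if h : s ∈ X ∧ s.card = n then Finsupp.single ⟨s, h⟩ 1 else 0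

lemma bv_of_mem {X : Set (Finset V)} {n : ℕ} {s : Finset V}
    (h : s ∈ X ∧ s.card = n) : bv X n s = Finsupp.single ⟨s, h⟩ 1 := by
  rw [bv, dif_pos h]

lemma bv_of_not {X : Set (Finset V)} {n : ℕ} {s : Finset V}
    (h : ¬ (s ∈ X ∧ s.card = n)) : bv X n s = 0 := by
  rw [bv, dif_neg h]

lemma bv_of_not_mem {X : Set (Finset V)} {n : ℕ} {s : Finset V}
    (h : s ∉ X) : bv X n s = 0 := bv_of_not (fun hc => h hc.1)

/-- extensionality principle: to prove equality of linear maps out of `chainsOf X n`,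
it suffices to check on basis vectors. -/
lemma lhom_ext_bv {X : Set (Finset V)} {n : ℕ} {M : Type*}
    [AddCommMonoid M] [Module ℤ M] {f g : chainsOf X n →ₗ[ℤ] M}
    (H : ∀ s, s ∈ X → s.card = n → f (bv X n s) = g (bv X n s)) : f = g := by
  apply Finsupp.lhom_ext (fun a b => ?_)
  have h1 : (Finsupp.single a b : chainsOf X n) = b • bv X n a.1 := by
    rw [bv_of_mem a.2, Finsupp.smul_single, smul_eq_mul, mul_one]
  rw [h1, map_smul, map_smul, H a.1 a.2.1 a.2.2]

open Classical in
lemma bdry_bv (X : Set (Finset V)) (n : ℕ) (s : Finset V) :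
    bdry X n (bv X (n+1) s) =
      if s ∈ X ∧ s.card = n + 1 then ∑ i ∈ s, sgn s i • bv X n (s.erase i) else 0 := by
  by_cases h : s ∈ X ∧ s.card = n + 1
  · rw [bv_of_mem h, if_pos h, bdry, Finsupp.lsum_single, LinearMap.sum_apply,
      ← Finset.sum_attach s (fun i => sgn s i • bv X n (s.erase i))]
    refine Finset.sum_congr rfl (fun i _ => ?_)
    rw [apply_dite (fun (f : ℤ →ₗ[ℤ] chainsOf X n) => f (1:ℤ))]
    simp only [show ((⟨s, h⟩ : {t : Finset V // t ∈ X ∧ t.card = n+1}) : Finset V) = s from rfl]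
    split
    · rename_i hi
      rw [bv_of_mem (show s.erase i.1 ∈ X ∧ (s.erase i.1).card = n from
        ⟨hi, by rw [Finset.card_erase_of_mem (show i.1 ∈ s from i.2), h.2]; rfl⟩)]
      simp [sgn]
    · rename_i hi
      rw [bv_of_not_mem hi, smul_zero]
      rfl
  · rw [bv_of_not h, if_neg h, map_zero]

open Classical in
lemma cobdry_bv [Fintype V] (X : Set (Finset V)) (n : ℕ) (s : Finset V) :
    cobdry X n (bv X n s) =
      if s ∈ X ∧ s.card = n then
        ∑ v ∈ Finset.univ \ s, sgn s v • bv X (n+1) (insert v s) else 0 := by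
  by_cases h : s ∈ X ∧ s.card = n
  · rw [bv_of_mem h, if_pos h, cobdry, Finsupp.lsum_single, LinearMap.sum_apply,
      ← Finset.sum_attach (Finset.univ \ s) (fun v => sgn s v • bv X (n+1) (insert v s))]
    refine Finset.sum_congr rfl (fun v _ => ?_)
    rw [apply_dite (fun (f : ℤ →ₗ[ℤ] chainsOf X (n+1)) => f (1:ℤ))]
    simp only [show ((⟨s, h⟩ : {t : Finset V // t ∈ X ∧ t.card = n}) : Finset V) = s from rfl]
    split
    · rename_i hv
      rw [bv_of_mem (show insert v.1 s ∈ X ∧ (insert v.1 s).card = n + 1 from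
        ⟨hv, by rw [Finset.card_insert_of_notMem (Finset.mem_sdiff.1 v.2).2, h.2]⟩)]
      simp [sgn]
    · rename_i hv
      rw [bv_of_not_mem hv, smul_zero]
      rfl
  · rw [bv_of_not h, if_neg h, map_zero]

lemma sgn_mul_self (s : Finset V) (i : V) : sgn s i * sgn s i = 1 := by
  rw [sgn, ← pow_add]
  exact Even.neg_one_pow ⟨_, rfl⟩

lemma sgn_erase {s : Finset V} {i : V} (v : V) (hi : i ∈ s) :
    sgn (s.erase i) v = (if i < v then -1 else 1) * sgn s v := by
  classical
  rw [sgn, sgn, Finset.filter_erase]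
  by_cases hlt : i < v
  · have him : i ∈ s.filter (fun x => x < v) := Finset.mem_filter.2 ⟨hi, hlt⟩
    rw [if_pos hlt, Finset.card_erase_of_mem him]
    obtain ⟨c, hc⟩ := Nat.exists_eq_succ_of_ne_zero (Finset.card_ne_zero_of_mem him)
    rw [hc]
    simp [pow_succ]
  · have him : i ∉ s.filter (fun x => x < v) := fun hm => hlt (Finset.mem_filter.1 hm).2
    rw [if_neg hlt, Finset.erase_eq_of_notMem him, one_mul]

lemma sgn_insert {s : Finset V} {v : V} (i : V) (hv : v ∉ s) :
    sgn (insert v s) i = (if v < i then -1 else 1) * sgn s i := by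
  classical
  rw [sgn, sgn, Finset.filter_insert]
  by_cases hlt : v < i
  · have him : v ∉ s.filter (fun x => x < i) := fun hm => hv (Finset.mem_filter.1 hm).1
    rw [if_pos hlt, if_pos hlt, Finset.card_insert_of_notMem him, pow_succ]
    ring
  · rw [if_neg hlt, if_neg hlt, one_mul]

/-- the global sign twist. -/
def eps (ω η : Finset V) : ℤ :=
  (-1 : ℤ) ^ (∑ j ∈ η, ((ω.filter fun x => x < j)).card)

lemma eps_mul_self (ω η : Finset V) : eps ω η * eps ω η = 1 := by
  rw [eps, ← pow_add]
  exact Even.neg_one_pow ⟨_, rfl⟩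

lemma eps_insert {ω η : Finset V} {i : V} (hi : i ∉ η) :
    eps ω (insert i η) = sgn ω i * eps ω η := by
  rw [eps, eps, Finset.sum_insert hi, pow_add, sgn]

lemma sgn_sdiff_mul {ω η : Finset V} (hη : η ⊆ ω) (i : V) :
    sgn (ω \ η) i * sgn η i = sgn ω i := by
  classical
  rw [sgn, sgn, sgn, ← pow_add]
  congr 1
  rw [← Finset.card_union_of_disjoint
      (Finset.disjoint_filter_filter Finset.sdiff_disjoint),
    ← Finset.filter_union, Finset.sdiff_union_of_subset hη]

/-- the full simplex on `ω`. -/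
def SetΔ (ω : Finset V) : Set (Finset V) := {τ : Finset V | τ ⊆ ω}

lemma chainsΔ_eq_zero {ω : Finset V} {n : ℕ} (hn : ω.card < n)
    (x : chainsOf (SetΔ ω) n) : x = 0 :=
  Finsupp.ext fun a => absurd (Finset.card_le_card a.2.1)
    (by rw [a.2.2]; omega)

section Maps
variable (X Y : Set (Finset V)) (ω : Finset V)

/-- inclusion of a subcomplex. -/
noncomputable def imap (h : ∀ s, s ∈ X → s ∈ Y) (n : ℕ) :
    chainsOf X n →ₗ[ℤ] chainsOf Y n :=
  Finsupp.lsum ℤ fun s => Finsupp.lsingle ⟨s.1, h _ s.2.1, s.2.2⟩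

open Classical in
/-- projection onto a subcomplex. -/
noncomputable def amap (n : ℕ) : chainsOf Y n →ₗ[ℤ] chainsOf X n :=
  Finsupp.lsum ℤ fun s => if h : s.1 ∈ X then Finsupp.lsingle ⟨s.1, h, s.2.2⟩ else 0

open Classical in
/-- complementation projection to the "dual" chains. -/
noncomputable def pmap (n k : ℕ) : chainsOf (SetΔ ω) n →ₗ[ℤ] chainsOf X k :=
  Finsupp.lsum ℤ fun s =>
    if h : ω \ s.1 ∈ X ∧ (ω \ s.1).card = k then
      eps ω (ω \ s.1) • Finsupp.lsingle ⟨ω \ s.1, h⟩ else 0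

open Classical in
/-- complementation section from the "dual" chains. -/
noncomputable def smap (k n : ℕ) : chainsOf X k →ₗ[ℤ] chainsOf (SetΔ ω) n :=
  Finsupp.lsum ℤ fun η =>
    if h : (ω \ η.1).card = n then
      eps ω η.1 • Finsupp.lsingle ⟨ω \ η.1, Finset.sdiff_subset, h⟩ else 0

open Classical in
/-- the contracting homotopy of the full simplex (coning off at `v`). -/
noncomputable def hmap (v : V) (hv : v ∈ ω) (n : ℕ) :
    chainsOf (SetΔ ω) n →ₗ[ℤ] chainsOf (SetΔ ω) (n+1) :=
  Finsupp.lsum ℤ fun τ =>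
    if h : v ∉ τ.1 then
      sgn τ.1 v • Finsupp.lsingle ⟨insert v τ.1,
        Finset.insert_subset hv τ.2.1,
        by rw [Finset.card_insert_of_notMem h, τ.2.2]⟩ else 0

open Classical in
lemma imap_bv (h : ∀ s, s ∈ X → s ∈ Y) (n : ℕ) (s : Finset V) :
    imap X Y h n (bv X n s) = if s ∈ X ∧ s.card = n then bv Y n s else 0 := by
  by_cases hs : s ∈ X ∧ s.card = n
  · rw [bv_of_mem hs, if_pos hs, imap, Finsupp.lsum_single,
      bv_of_mem ⟨h _ hs.1, hs.2⟩]
    simp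
  · rw [bv_of_not hs, if_neg hs, map_zero]

open Classical in
lemma amap_bv (n : ℕ) (s : Finset V) :
    amap X Y n (bv Y n s) = if s ∈ Y ∧ s.card = n then bv X n s else 0 := by
  by_cases hs : s ∈ Y ∧ s.card = n
  · rw [bv_of_mem hs, if_pos hs, amap, Finsupp.lsum_single,
      apply_dite (fun (f : ℤ →ₗ[ℤ] chainsOf X n) => f (1:ℤ))]
    simp only [show ((⟨s, hs⟩ : {t : Finset V // t ∈ Y ∧ t.card = n}) : Finset V) = s from rfl]
    split
    · rename_i hX
      rw [bv_of_mem (show s ∈ X ∧ s.card = n from ⟨hX, hs.2⟩)]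
      simp
    · rename_i hX
      rw [bv_of_not_mem hX]
      rfl
  · rw [bv_of_not hs, if_neg hs, map_zero]

open Classical in
lemma pmap_bv (n k : ℕ) (s : Finset V) :
    pmap X ω n k (bv (SetΔ ω) n s) =
      if s ∈ SetΔ ω ∧ s.card = n then eps ω (ω \ s) • bv X k (ω \ s) else 0 := by
  by_cases hs : s ∈ SetΔ ω ∧ s.card = n
  · rw [bv_of_mem hs, if_pos hs, pmap, Finsupp.lsum_single,
      apply_dite (fun (f : ℤ →ₗ[ℤ] chainsOf X k) => f (1:ℤ))]
    simp only [show ((⟨s, hs⟩ : {t : Finset V // t ∈ SetΔ ω ∧ t.card = n}) : Finset V) = s from rfl]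
    split
    · rename_i hX
      rw [bv_of_mem hX]
      simp
    · rename_i hX
      rw [bv_of_not hX, smul_zero]
      rfl
  · rw [bv_of_not hs, if_neg hs, map_zero]

open Classical in
lemma smap_bv (k n : ℕ) (η : Finset V) :
    smap X ω k n (bv X k η) =
      if η ∈ X ∧ η.card = k then eps ω η • bv (SetΔ ω) n (ω \ η) else 0 := by
  by_cases hs : η ∈ X ∧ η.card = k
  · rw [bv_of_mem hs, if_pos hs, smap, Finsupp.lsum_single,
      apply_dite (fun (f : ℤ →ₗ[ℤ] chainsOf (SetΔ ω) n) => f (1:ℤ))]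
    simp only [show ((⟨η, hs⟩ : {t : Finset V // t ∈ X ∧ t.card = k}) : Finset V) = η from rfl]
    split
    · rename_i hc
      rw [bv_of_mem (show ω \ η ∈ SetΔ ω ∧ (ω \ η).card = n from ⟨Finset.sdiff_subset, hc⟩)]
      simp
    · rename_i hc
      rw [bv_of_not (fun hcc => hc hcc.2), smul_zero]
      rfl
  · rw [bv_of_not hs, if_neg hs, map_zero]

open Classical in
lemma hmap_bv (v : V) (hv : v ∈ ω) (n : ℕ) (τ : Finset V) :
    hmap ω v hv n (bv (SetΔ ω) n τ) =
      if τ ∈ SetΔ ω ∧ τ.card = n then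
        (if v ∈ τ then 0 else sgn τ v • bv (SetΔ ω) (n+1) (insert v τ)) else 0 := by
  by_cases hs : τ ∈ SetΔ ω ∧ τ.card = n
  · rw [bv_of_mem hs, if_pos hs, hmap, Finsupp.lsum_single,
      apply_dite (fun (f : ℤ →ₗ[ℤ] chainsOf (SetΔ ω) (n+1)) => f (1:ℤ))]
    simp only [show ((⟨τ, hs⟩ : {t : Finset V // t ∈ SetΔ ω ∧ t.card = n}) : Finset V) = τ from rfl]
    split
    · rename_i hvτ
      rw [bv_of_mem (show insert v τ ∈ SetΔ ω ∧ (insert v τ).card = n + 1 from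
        ⟨Finset.insert_subset hv hs.1, by rw [Finset.card_insert_of_notMem hvτ, hs.2]⟩)]
      simp
    · rename_i hvτ
      rw [if_pos (not_not.1 hvτ)]
      rfl
  · rw [bv_of_not hs, if_neg hs, map_zero]

end Maps

section Identities
variable {L D : Set (Finset V)} {ω : Finset V}
  (hLω : ∀ s, s ∈ L → s ∈ SetΔ ω)
  (hLsub : ∀ s, s ∈ L → ∀ t, t ⊆ s → t ∈ L)
  (hDω : ∀ η, η ∈ D → η ⊆ ω)
  (hdual : ∀ τ η : Finset V, τ ⊆ ω → (∀ x, x ∈ η ↔ (x ∈ ω ∧ x ∉ τ)) → (τ ∈ D ↔ ¬ η ∈ L))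

include hLω in
lemma I1 (n : ℕ) : amap L (SetΔ ω) n ∘ₗ imap L (SetΔ ω) hLω n = LinearMap.id := by
  refine lhom_ext_bv (fun s hs hc => ?_)
  rw [LinearMap.comp_apply, imap_bv, if_pos ⟨hs, hc⟩, amap_bv,
    if_pos ⟨hLω _ hs, hc⟩, LinearMap.id_apply]

include hLω hdual in
lemma I2 (n k : ℕ) : pmap D ω n k ∘ₗ imap L (SetΔ ω) hLω n = 0 := by
  have hdual' : ∀ τ, τ ⊆ ω → (τ ∈ D ↔ ¬ ω \ τ ∈ L) :=
    fun τ hτ => hdual τ (ω \ τ) hτ (fun x => Finset.mem_sdiff)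
  refine lhom_ext_bv (fun s hs hc => ?_)
  have hsub : s ⊆ ω := hLω _ hs
  have hD : ω \ s ∉ D := fun hmem =>
    ((hdual' _ Finset.sdiff_subset).1 hmem) (by rwa [Finset.sdiff_sdiff_eq_self hsub])
  rw [LinearMap.comp_apply, imap_bv, if_pos ⟨hs, hc⟩, pmap_bv,
    if_pos ⟨hLω _ hs, hc⟩, bv_of_not_mem hD, smul_zero, LinearMap.zero_apply]

include hDω in
lemma I3 (n k : ℕ) (hnk : n + k = ω.card) :
    pmap D ω n k ∘ₗ smap D ω k n = LinearMap.id := by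
  refine lhom_ext_bv (fun η hη hc => ?_)
  have hsub : η ⊆ ω := hDω _ hη
  have hcard : (ω \ η).card = n := by
    rw [Finset.card_sdiff_of_subset hsub, hc]; omega
  rw [LinearMap.comp_apply, smap_bv, if_pos ⟨hη, hc⟩, map_smul, pmap_bv,
    if_pos ⟨Finset.sdiff_subset, hcard⟩, Finset.sdiff_sdiff_eq_self hsub,
    smul_smul, eps_mul_self, one_smul, LinearMap.id_apply]

include hLω hDω hdual in
lemma I4 (n k : ℕ) (hnk : n + k = ω.card) :
    imap L (SetΔ ω) hLω n ∘ₗ amap L (SetΔ ω) n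
      + smap D ω k n ∘ₗ pmap D ω n k = LinearMap.id := by
  have hdual' : ∀ τ, τ ⊆ ω → (τ ∈ D ↔ ¬ ω \ τ ∈ L) :=
    fun τ hτ => hdual τ (ω \ τ) hτ (fun x => Finset.mem_sdiff)
  refine lhom_ext_bv (fun s hs hc => ?_)
  have hcard : (ω \ s).card = k := by
    rw [Finset.card_sdiff_of_subset hs, hc]; omega
  rw [LinearMap.add_apply, LinearMap.comp_apply, LinearMap.comp_apply,
    amap_bv, if_pos ⟨hs, hc⟩, pmap_bv, if_pos ⟨hs, hc⟩, LinearMap.id_apply]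
  by_cases hmem : s ∈ L
  · have hD : ω \ s ∉ D := fun hm =>
      ((hdual' _ Finset.sdiff_subset).1 hm) (by rwa [Finset.sdiff_sdiff_eq_self hs])
    rw [imap_bv, if_pos ⟨hmem, hc⟩, bv_of_not_mem hD, smul_zero, map_zero, add_zero]
  · have hD : ω \ s ∈ D := (hdual' _ Finset.sdiff_subset).2
      (by rwa [Finset.sdiff_sdiff_eq_self hs])
    rw [bv_of_not_mem hmem, map_zero, map_smul, smap_bv, if_pos ⟨hD, hcard⟩,
      Finset.sdiff_sdiff_eq_self hs, smul_smul, eps_mul_self, one_smul, zero_add]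

include hLω hLsub in
lemma I5 (n : ℕ) :
    bdry (SetΔ ω) n ∘ₗ imap L (SetΔ ω) hLω (n+1)
      = imap L (SetΔ ω) hLω n ∘ₗ bdry L n := by
  refine lhom_ext_bv (fun s hs hc => ?_)
  rw [LinearMap.comp_apply, LinearMap.comp_apply, imap_bv, if_pos ⟨hs, hc⟩,
    bdry_bv, if_pos ⟨hLω _ hs, hc⟩, bdry_bv, if_pos ⟨hs, hc⟩, map_sum]
  refine Finset.sum_congr rfl (fun i hi => ?_)
  rw [map_smul, imap_bv, if_pos ⟨hLsub _ hs _ (Finset.erase_subset _ _), by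
    rw [Finset.card_erase_of_mem hi, hc]; rfl⟩]

end Identities

section Hard
variable {ω : Finset V} {v : V}

lemma I6a (hv : v ∈ ω) :
    bdry (SetΔ ω) 0 ∘ₗ hmap ω v hv 0 = LinearMap.id := by
  refine lhom_ext_bv (fun τ hs hc => ?_)
  have hτ : τ = ∅ := Finset.card_eq_zero.1 hc
  subst hτ
  rw [LinearMap.comp_apply, hmap_bv, if_pos (show (∅:Finset V) ∈ SetΔ ω ∧ (∅:Finset V).card = 0 from ⟨hs, hc⟩),
    if_neg (Finset.notMem_empty v), map_smul, bdry_bv,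
    if_pos (show insert v (∅:Finset V) ∈ SetΔ ω ∧ (insert v (∅:Finset V)).card = 0 + 1 from
      ⟨Finset.insert_subset hv hs, by simp⟩), LinearMap.id_apply]
  rw [show sgn (∅:Finset V) v = 1 from by simp [sgn], one_smul,
    Finset.sum_insert (Finset.notMem_empty v), Finset.sum_empty, add_zero,
    Finset.erase_insert (Finset.notMem_empty v),
    show sgn (insert v (∅:Finset V)) v = 1 from by simp [sgn, Finset.filter_singleton], one_smul]

lemma I6b (hv : v ∈ ω) (n : ℕ) :
    bdry (SetΔ ω) (n+1) ∘ₗ hmap ω v hv (n+1)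
      + hmap ω v hv n ∘ₗ bdry (SetΔ ω) n = LinearMap.id := by
  refine lhom_ext_bv (fun τ hs hc => ?_)
  have herase : ∀ i ∈ τ, hmap ω v hv n (sgn τ i • bv (SetΔ ω) n (τ.erase i))
      = sgn τ i • (if v ∈ τ.erase i then 0
          else sgn (τ.erase i) v • bv (SetΔ ω) (n+1) (insert v (τ.erase i))) := by
    intro i hi
    rw [map_smul, hmap_bv, if_pos (show τ.erase i ∈ SetΔ ω ∧ (τ.erase i).card = n from
      ⟨(fun x hx => hs (Finset.mem_of_mem_erase hx)),
        by rw [Finset.card_erase_of_mem hi, hc]; rfl⟩)]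
  rw [LinearMap.add_apply, LinearMap.comp_apply, LinearMap.comp_apply,
    bdry_bv, if_pos (show τ ∈ SetΔ ω ∧ τ.card = n+1 from ⟨hs, hc⟩), map_sum,
    Finset.sum_congr rfl herase,
    hmap_bv, if_pos (show τ ∈ SetΔ ω ∧ τ.card = n+1 from ⟨hs, hc⟩), LinearMap.id_apply]
  by_cases hvτ : v ∈ τ
  · rw [if_pos hvτ, map_zero, zero_add]
    rw [Finset.sum_eq_single_of_mem v hvτ (fun i hi hne => by
      rw [if_pos (Finset.mem_erase.2 ⟨fun he => hne he.symm, hvτ⟩), smul_zero])]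
    rw [if_neg (Finset.notMem_erase v τ), smul_smul,
      sgn_erase v hvτ, if_neg (lt_irrefl v), one_mul, sgn_mul_self,
      Finset.insert_erase hvτ, one_smul]
  · -- v ∉ τ
    rw [if_neg hvτ, map_smul, bdry_bv,
      if_pos (show insert v τ ∈ SetΔ ω ∧ (insert v τ).card = n+1+1 from
        ⟨Finset.insert_subset hv hs, by rw [Finset.card_insert_of_notMem hvτ, hc]⟩),
      Finset.sum_insert hvτ, smul_add, Finset.erase_insert hvτ,
      sgn_insert v hvτ, if_neg (lt_irrefl v), one_mul, smul_smul, sgn_mul_self, one_smul]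
    have hterm1 : ∀ i ∈ τ,
        sgn τ v • (sgn (insert v τ) i • bv (SetΔ ω) (n+1) ((insert v τ).erase i))
        = (sgn τ v * ((if v < i then -1 else 1) * sgn τ i)) •
            bv (SetΔ ω) (n+1) (insert v (τ.erase i)) := by
      intro i hi
      rw [smul_smul, sgn_insert i hvτ,
        Finset.erase_insert_of_ne (fun he => hvτ (by rw [he]; exact hi))]
    have hterm2 : ∀ i ∈ τ, sgn τ i • (if v ∈ τ.erase i then 0
          else sgn (τ.erase i) v • bv (SetΔ ω) (n+1) (insert v (τ.erase i)))
        = (sgn τ i * ((if i < v then -1 else 1) * sgn τ v)) •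
            bv (SetΔ ω) (n+1) (insert v (τ.erase i)) := by
      intro i hi
      rw [if_neg (fun hm => hvτ (Finset.mem_of_mem_erase hm)), smul_smul, sgn_erase v hi]
    rw [Finset.smul_sum, Finset.sum_congr rfl hterm1, Finset.sum_congr rfl hterm2,
      add_assoc, ← Finset.sum_add_distrib]
    have hzero : ∀ i ∈ τ, (sgn τ v * ((if v < i then -1 else 1) * sgn τ i)) •
          bv (SetΔ ω) (n+1) (insert v (τ.erase i))
        + (sgn τ i * ((if i < v then -1 else 1) * sgn τ v)) •
            bv (SetΔ ω) (n+1) (insert v (τ.erase i)) = 0 := by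
      intro i hi
      rcases lt_or_gt_of_ne (show i ≠ v from fun he => hvτ (he ▸ hi)) with hlt | hlt
      · rw [if_neg (asymm hlt), if_pos hlt, ← add_smul,
          show sgn τ v * (1 * sgn τ i) + sgn τ i * (-1 * sgn τ v) = 0 by ring, zero_smul]
      · rw [if_pos hlt, if_neg (asymm hlt), ← add_smul,
          show sgn τ v * (-1 * sgn τ i) + sgn τ i * (1 * sgn τ v) = 0 by ring, zero_smul]
    rw [Finset.sum_eq_zero hzero, add_zero]

end Hard

section Hard2
variable {ω : Finset V}

lemma I7 (ω : Finset V) (n : ℕ) :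
    bdry (SetΔ ω) n ∘ₗ bdry (SetΔ ω) (n+1) = 0 := by
  refine lhom_ext_bv (fun s hs hc => ?_)
  have hterm : ∀ i ∈ s, bdry (SetΔ ω) n (sgn s i • bv (SetΔ ω) (n+1) (s.erase i))
      = ∑ j ∈ s.erase i, (sgn s i * sgn (s.erase i) j) • bv (SetΔ ω) n ((s.erase i).erase j) := by
    intro i hi
    rw [map_smul, bdry_bv, if_pos (show s.erase i ∈ SetΔ ω ∧ (s.erase i).card = n+1 from
      ⟨fun x hx => hs (Finset.mem_of_mem_erase hx),
        by rw [Finset.card_erase_of_mem hi, hc]; rfl⟩), Finset.smul_sum]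
    exact Finset.sum_congr rfl (fun j _ => smul_smul _ _ _)
  rw [LinearMap.comp_apply, bdry_bv, if_pos (show s ∈ SetΔ ω ∧ s.card = n+1+1 from ⟨hs, hc⟩),
    map_sum, Finset.sum_congr rfl hterm, Finset.sum_sigma', LinearMap.zero_apply]
  refine Finset.sum_involution (fun a _ => ⟨a.2, a.1⟩) (fun a ha => ?_) ?_ (fun a ha => ?_)
    (fun a ha => rfl)
  · obtain ⟨ha1, ha2⟩ := Finset.mem_sigma.1 ha
    have hne : a.2 ≠ a.1 := (Finset.mem_erase.1 ha2).1
    have ha2s : a.2 ∈ s := Finset.mem_of_mem_erase ha2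
    show _ • bv (SetΔ ω) n ((s.erase a.1).erase a.2)
      + _ • bv (SetΔ ω) n ((s.erase a.2).erase a.1) = 0
    rw [Finset.erase_right_comm (a := a.2) (b := a.1), sgn_erase a.2 ha1, sgn_erase a.1 ha2s,
      ← add_smul]
    rcases lt_or_gt_of_ne hne with hlt | hlt
    · rw [if_neg (asymm hlt), if_pos hlt,
        show sgn s a.1 * (1 * sgn s a.2) + sgn s a.2 * (-1 * sgn s a.1) = 0 by ring, zero_smul]
    · rw [if_pos hlt, if_neg (asymm hlt),
        show sgn s a.1 * (-1 * sgn s a.2) + sgn s a.2 * (1 * sgn s a.1) = 0 by ring, zero_smul]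
  · intro a ha _ he
    exact (Finset.mem_erase.1 (Finset.mem_sigma.1 ha).2).1 (congrArg Sigma.fst he)
  · obtain ⟨ha1, ha2⟩ := Finset.mem_sigma.1 ha
    exact Finset.mem_sigma.2 ⟨Finset.mem_of_mem_erase ha2,
      Finset.mem_erase.2 ⟨fun he => (Finset.mem_erase.1 ha2).1 he.symm, ha1⟩⟩

lemma I8 [Fintype V] {D : Set (Finset V)} (hDω : ∀ η, η ∈ D → η ⊆ ω)
    (n k : ℕ) (hnk : n + 1 + k = ω.card) :
    pmap D ω n (k+1) ∘ₗ (bdry (SetΔ ω) n ∘ₗ smap D ω k (n+1)) = cobdry D k := by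
  refine lhom_ext_bv (fun η hη hc => ?_)
  have hsub : η ⊆ ω := hDω η hη
  have hcard : (ω \ η).card = n + 1 := by
    rw [Finset.card_sdiff_of_subset hsub, hc]; omega
  have hterm : ∀ i ∈ ω \ η,
      eps ω η • pmap D ω n (k+1) (sgn (ω \ η) i • bv (SetΔ ω) n ((ω \ η).erase i))
        = sgn η i • bv D (k+1) (insert i η) := by
    intro i hi
    obtain ⟨hiω, hiη⟩ := Finset.mem_sdiff.1 hi
    have hkey : ω \ ((ω \ η).erase i) = insert i η := by
      rw [← Finset.sdiff_insert, Finset.sdiff_sdiff_eq_self (Finset.insert_subset hiω hsub)]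
    rw [map_smul, pmap_bv, if_pos (show (ω \ η).erase i ∈ SetΔ ω ∧ ((ω \ η).erase i).card = n from
      ⟨fun x hx => (Finset.mem_sdiff.1 (Finset.mem_of_mem_erase hx)).1,
        by rw [Finset.card_erase_of_mem hi, hcard]; rfl⟩),
      hkey, smul_smul, smul_smul, eps_insert hiη, ← sgn_sdiff_mul hsub i]
    congr 1
    linear_combination (sgn η i * eps ω η * eps ω η) * sgn_mul_self (ω \ η) i
      + sgn η i * eps_mul_self ω η
  rw [LinearMap.comp_apply, LinearMap.comp_apply, smap_bv, if_pos ⟨hη, hc⟩,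
    map_smul, bdry_bv, if_pos (show ω \ η ∈ SetΔ ω ∧ (ω \ η).card = n + 1 from
      ⟨Finset.sdiff_subset, hcard⟩), map_smul, map_sum, Finset.smul_sum,
    Finset.sum_congr rfl hterm, cobdry_bv, if_pos ⟨hη, hc⟩]
  refine Finset.sum_subset (Finset.sdiff_subset_sdiff (Finset.subset_univ ω) le_rfl)
    (fun x hxu hx => ?_)
  have hxω : x ∉ ω := fun hxo =>
    hx (Finset.mem_sdiff.2 ⟨hxo, (Finset.mem_sdiff.1 hxu).2⟩)
  rw [bv_of_not_mem (fun hmem => hxω (hDω _ hmem (Finset.mem_insert_self x η))), smul_zero]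

end Hard2

lemma cyc_succ (X : Set (Finset V)) (n : ℕ) :
    cyc X (n+1) = LinearMap.ker (bdry X n) := rfl
lemma cobnd_succ [Fintype V] (X : Set (Finset V)) (n : ℕ) :
    cobnd X (n+1) = LinearMap.range (cobdry X n) := rfl
lemma cobnd_zero [Fintype V] (X : Set (Finset V)) : cobnd X 0 = ⊥ := rfl

section Main
variable [Fintype V] {L D : Set (Finset V)} {ω : Finset V} {v : V}

/-- the chain-level duality map. -/
noncomputable def Fmap (hv : v ∈ ω) (hLω : ∀ s, s ∈ L → s ∈ SetΔ ω)
    (p q : ℕ) : chainsOf L p →ₗ[ℤ] chainsOf D q :=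
  pmap D ω (p+1) q ∘ₗ hmap ω v hv p ∘ₗ imap L (SetΔ ω) hLω p

/-- the chain-level inverse duality map. -/
noncomputable def Gmap (hLω : ∀ s, s ∈ L → s ∈ SetΔ ω) (p q : ℕ) :
    chainsOf D q →ₗ[ℤ] chainsOf L p :=
  amap L (SetΔ ω) p ∘ₗ bdry (SetΔ ω) p ∘ₗ smap D ω q (p+1)

variable (hv : v ∈ ω)
  (hLω : ∀ s, s ∈ L → s ∈ SetΔ ω)
  (hLsub : ∀ s, s ∈ L → ∀ t, t ⊆ s → t ∈ L)
  (hDω : ∀ η, η ∈ D → η ⊆ ω)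
  (hdual : ∀ τ η : Finset V, τ ⊆ ω → (∀ x, x ∈ η ↔ (x ∈ ω ∧ x ∉ τ)) → (τ ∈ D ↔ ¬ η ∈ L))
  {p q : ℕ} (hpq : p + q + 1 = ω.card)

omit [Fintype V] in
include hLω in
lemma ptI1 : ∀ n (x : chainsOf L n),
    amap L (SetΔ ω) n (imap L (SetΔ ω) hLω n x) = x := fun n x => by
  simpa using LinearMap.congr_fun (I1 hLω n) x

omit [Fintype V] in
include hLω hdual in
lemma ptI2 : ∀ n k (x : chainsOf L n),
    pmap D ω n k (imap L (SetΔ ω) hLω n x) = 0 := fun n k x => by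
  simpa using LinearMap.congr_fun (I2 hLω hdual n k) x

omit [Fintype V] in
include hDω in
lemma ptI3 : ∀ n k (_ : n + k = ω.card) (x : chainsOf D k),
    pmap D ω n k (smap D ω k n x) = x := fun n k hnk x => by
  simpa using LinearMap.congr_fun (I3 hDω n k hnk) x

omit [Fintype V] in
include hLω hDω hdual in
lemma ptI4 : ∀ n k (_ : n + k = ω.card) (x : chainsOf (SetΔ ω) n),
    imap L (SetΔ ω) hLω n (amap L (SetΔ ω) n x) + smap D ω k n (pmap D ω n k x) = x :=
  fun n k hnk x => by
    simpa using LinearMap.congr_fun (I4 hLω hDω hdual n k hnk) x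

omit [Fintype V] in
include hLω hLsub in
lemma ptI5 : ∀ n (x : chainsOf L (n+1)),
    bdry (SetΔ ω) n (imap L (SetΔ ω) hLω (n+1) x) = imap L (SetΔ ω) hLω n (bdry L n x) :=
  fun n x => by simpa using LinearMap.congr_fun (I5 hLω hLsub n) x

omit [Fintype V] in
lemma ptI6b (hv : v ∈ ω) : ∀ n (x : chainsOf (SetΔ ω) (n+1)),
    bdry (SetΔ ω) (n+1) (hmap ω v hv (n+1) x) + hmap ω v hv n (bdry (SetΔ ω) n x) = x :=
  fun n x => by simpa using LinearMap.congr_fun (I6b hv n) x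

omit [Fintype V] in
lemma ptI7 : ∀ n (x : chainsOf (SetΔ ω) (n+2)),
    bdry (SetΔ ω) n (bdry (SetΔ ω) (n+1) x) = 0 := fun n x => by
  simpa using LinearMap.congr_fun (I7 ω n) x

include hDω in
lemma ptI8 : ∀ n k (_ : n + 1 + k = ω.card) (x : chainsOf D k),
    pmap D ω n (k+1) (bdry (SetΔ ω) n (smap D ω k (n+1) x)) = cobdry D k x :=
  fun n k hnk x => by simpa using LinearMap.congr_fun (I8 hDω n k hnk) x

omit [Fintype V] in
include hLω hLsub in
/-- key: boundary of the cone over a cycle recovers the cycle. -/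
lemma dh_iz {z : chainsOf L p} (hz : z ∈ cyc L p) :
    bdry (SetΔ ω) p (hmap ω v hv p (imap L (SetΔ ω) hLω p z)) =
      imap L (SetΔ ω) hLω p z := by
  cases p with
  | zero => simpa using LinearMap.congr_fun (I6a hv) (imap L (SetΔ ω) hLω 0 z)
  | succ p' =>
    have h6 := ptI6b hv p' (imap L (SetΔ ω) hLω (p'+1) z)
    rw [ptI5 hLω hLsub p' z, LinearMap.mem_ker.1 hz, map_zero, map_zero, add_zero] at h6
    exact h6

include hv hLω hLsub hDω hdual hpq in
lemma lemF1 {z : chainsOf L p} (hz : z ∈ cyc L p) :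
    cobdry D q (Fmap hv hLω p q z) = 0 := by
  have hF : Fmap hv hLω p q z
      = pmap D ω (p+1) q (hmap ω v hv p (imap L (SetΔ ω) hLω p z)) := rfl
  have h4 := eq_sub_of_add_eq' (ptI4 hLω hDω hdual (p+1) q (by omega)
    (hmap ω v hv p (imap L (SetΔ ω) hLω p z)))
  rw [← ptI8 hDω p q (by omega) (Fmap hv hLω p q z), hF, h4, map_sub, map_sub,
    dh_iz hv hLω hLsub hz, ptI5 hLω hLsub p, ptI2 hLω hdual p (q+1),
    ptI2 hLω hdual p (q+1), sub_zero]

include hv hLω hLsub hDω hdual hpq in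
lemma lemF2 (w : chainsOf L (p+1)) :
    Fmap hv hLω p q (bdry L p w) ∈ cobnd D q := by
  have h6 := eq_sub_of_add_eq' (ptI6b hv p (imap L (SetΔ ω) hLω (p+1) w))
  have hF : Fmap hv hLω p q (bdry L p w)
      = pmap D ω (p+1) q (imap L (SetΔ ω) hLω (p+1) w)
        - pmap D ω (p+1) q (bdry (SetΔ ω) (p+1)
            (hmap ω v hv (p+1) (imap L (SetΔ ω) hLω (p+1) w))) := by
    show pmap D ω (p+1) q (hmap ω v hv p (imap L (SetΔ ω) hLω p (bdry L p w))) = _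
    rw [← ptI5 hLω hLsub p, h6, map_sub]
  rw [hF, ptI2 hLω hdual (p+1) q, zero_sub]
  cases q with
  | zero =>
    have hu0 : hmap ω v hv (p+1) (imap L (SetΔ ω) hLω (p+1) w) = 0 :=
      chainsΔ_eq_zero (by omega) _
    rw [hu0, map_zero, map_zero, neg_zero]
    exact Submodule.zero_mem _
  | succ q' =>
    have h4u := (ptI4 hLω hDω hdual (p+1+1) q' (by omega)
      (hmap ω v hv (p+1) (imap L (SetΔ ω) hLω (p+1) w))).symm
    rw [h4u, map_add, map_add, ptI5 hLω hLsub (p+1), ptI2 hLω hdual (p+1) (q'+1),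
      ptI8 hDω (p+1) q' (by omega), zero_add, cobnd_succ]
    exact Submodule.neg_mem _ ⟨_, rfl⟩

include hv hLω hLsub hDω hdual hpq in
lemma lemG1 {d : chainsOf D q} (hd : cobdry D q d = 0) :
    Gmap hLω p q d ∈ cyc L p := by
  cases p with
  | zero => exact Submodule.mem_top
  | succ p' =>
    have hpi : pmap D ω (p'+1) (q+1) (bdry (SetΔ ω) (p'+1) (smap D ω q (p'+1+1) d)) = 0 := by
      rw [ptI8 hDω (p'+1) q (by omega), hd]
    have h4 := ptI4 hLω hDω hdual (p'+1) (q+1) (by omega)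
      (bdry (SetΔ ω) (p'+1) (smap D ω q (p'+1+1) d))
    rw [hpi, map_zero, add_zero] at h4
    have hker : imap L (SetΔ ω) hLω p' (bdry L p' (Gmap hLω (p'+1) q d)) = 0 := by
      rw [← ptI5 hLω hLsub p']
      show bdry (SetΔ ω) p' (imap L (SetΔ ω) hLω (p'+1) (amap L (SetΔ ω) (p'+1)
        (bdry (SetΔ ω) (p'+1) (smap D ω q (p'+1+1) d)))) = 0
      rw [h4, ptI7 p']
    have h0 := congrArg (amap L (SetΔ ω) p') hker
    rw [ptI1 hLω p', map_zero] at h0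
    exact LinearMap.mem_ker.2 h0

include hv hLω hLsub hDω hdual hpq in
lemma lemG2 {d : chainsOf D q} (hd : d ∈ cobnd D q) :
    Gmap hLω p q d ∈ LinearMap.range (bdry L p) := by
  cases q with
  | zero =>
    have hd0 : d = 0 := by rw [cobnd_zero] at hd; simpa using hd
    rw [hd0, map_zero]
    exact Submodule.zero_mem _
  | succ q' =>
    rw [cobnd_succ] at hd
    obtain ⟨e, he⟩ := hd
    have hdw : d = pmap D ω (p+1) (q'+1)
        (bdry (SetΔ ω) (p+1) (smap D ω q' (p+1+1) e)) := by
      rw [ptI8 hDω (p+1) q' (by omega)]; exact he.symm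
    have h4 := eq_sub_of_add_eq' (ptI4 hLω hDω hdual (p+1) (q'+1) (by omega)
      (bdry (SetΔ ω) (p+1) (smap D ω q' (p+1+1) e)))
    have hG : Gmap hLω p (q'+1) d
        = amap L (SetΔ ω) p (bdry (SetΔ ω) p (smap D ω (q'+1) (p+1) d)) := rfl
    rw [hG, hdw, h4, map_sub, ptI7 p, zero_sub, map_neg, ptI5 hLω hLsub p,
      ptI1 hLω p]
    exact ⟨-(amap L (SetΔ ω) (p+1) (bdry (SetΔ ω) (p+1) (smap D ω q' (p+1+1) e))),
      by rw [map_neg]⟩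

include hv hLω hLsub hDω hdual hpq in
lemma lemGF {z : chainsOf L p} (hz : z ∈ cyc L p) :
    Gmap (D := D) hLω p q (Fmap hv hLω p q z) - z ∈ LinearMap.range (bdry L p) := by
  have h4 := eq_sub_of_add_eq' (ptI4 hLω hDω hdual (p+1) q (by omega)
    (hmap ω v hv p (imap L (SetΔ ω) hLω p z)))
  have hG : Gmap hLω p q (Fmap hv hLω p q z)
      = amap L (SetΔ ω) p (bdry (SetΔ ω) p (smap D ω q (p+1)
          (pmap D ω (p+1) q (hmap ω v hv p (imap L (SetΔ ω) hLω p z))))) := rfl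
  rw [hG, h4, map_sub, dh_iz hv hLω hLsub hz, ptI5 hLω hLsub p, map_sub,
    ptI1 hLω p, ptI1 hLω p]
  exact ⟨-(amap L (SetΔ ω) (p+1) (hmap ω v hv p (imap L (SetΔ ω) hLω p z))),
    by rw [map_neg]; abel⟩

include hv hLω hLsub hDω hdual hpq in
lemma lemFG {d : chainsOf D q} (hd : cobdry D q d = 0) :
    Fmap hv hLω p q (Gmap hLω p q d) - d ∈ cobnd D q := by
  have hpi : pmap D ω p (q+1) (bdry (SetΔ ω) p (smap D ω q (p+1) d)) = 0 := by
    rw [ptI8 hDω p q (by omega), hd]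
  have h4 := ptI4 hLω hDω hdual p (q+1) (by omega)
    (bdry (SetΔ ω) p (smap D ω q (p+1) d))
  rw [hpi, map_zero, add_zero] at h4
  have h6 := eq_sub_of_add_eq' (ptI6b hv p (smap D ω q (p+1) d))
  have hFG : Fmap hv hLω p q (Gmap hLω p q d)
      = pmap D ω (p+1) q (hmap ω v hv p (imap L (SetΔ ω) hLω p (amap L (SetΔ ω) p
          (bdry (SetΔ ω) p (smap D ω q (p+1) d))))) := rfl
  rw [hFG, h4, h6, map_sub, ptI3 hDω (p+1) q (by omega)]
  cases q with
  | zero =>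
    have hu0 : hmap ω v hv (p+1) (smap D ω 0 (p+1) d) = 0 :=
      chainsΔ_eq_zero (by omega) _
    rw [hu0, map_zero, map_zero, sub_zero, sub_self]
    exact Submodule.zero_mem _
  | succ q' =>
    have h4u := (ptI4 hLω hDω hdual (p+1+1) q' (by omega)
      (hmap ω v hv (p+1) (smap D ω (q'+1) (p+1) d))).symm
    rw [h4u, map_add, map_add, ptI5 hLω hLsub (p+1), ptI2 hLω hdual (p+1) (q'+1),
      ptI8 hDω (p+1) q' (by omega), zero_add, cobnd_succ,
      show d - (cobdry D q' (pmap D ω (p+1+1) q'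
          (hmap ω v hv (p+1) (smap D ω (q'+1) (p+1) d)))) - d
        = -(cobdry D q' (pmap D ω (p+1+1) q'
          (hmap ω v hv (p+1) (smap D ω (q'+1) (p+1) d)))) from by abel]
    exact Submodule.neg_mem _ ⟨_, rfl⟩

end Main

section Assemble
variable [Fintype V] {L D : Set (Finset V)} {ω : Finset V} {v : V}
variable (hv : v ∈ ω)
  (hLω : ∀ s, s ∈ L → s ∈ SetΔ ω)
  (hLsub : ∀ s, s ∈ L → ∀ t, t ⊆ s → t ∈ L)
  (hDω : ∀ η, η ∈ D → η ⊆ ω)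
  (hdual : ∀ τ η : Finset V, τ ⊆ ω → (∀ x, x ∈ η ↔ (x ∈ ω ∧ x ∉ τ)) → (τ ∈ D ↔ ¬ η ∈ L))
  {p q : ℕ} (hpq : p + q + 1 = ω.card)

include hv hLω hLsub hDω hdual hpq in
lemma main_equiv : Nonempty (Hgrp L p ≃ₗ[ℤ] coHgrp D q) := by
  let Fc : cyc L p →ₗ[ℤ] LinearMap.ker (cobdry D q) :=
    LinearMap.codRestrict _ ((Fmap hv hLω p q) ∘ₗ (cyc L p).subtype)
      (fun c => LinearMap.mem_ker.2 (lemF1 hv hLω hLsub hDω hdual hpq c.2))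
  let Gc : LinearMap.ker (cobdry D q) →ₗ[ℤ] cyc L p :=
    LinearMap.codRestrict _ ((Gmap hLω p q) ∘ₗ (LinearMap.ker (cobdry D q)).subtype)
      (fun c => lemG1 hv hLω hLsub hDω hdual hpq (LinearMap.mem_ker.1 c.2))
  have hFN : Submodule.comap (cyc L p).subtype (LinearMap.range (bdry L p))
      ≤ Submodule.comap Fc
        (Submodule.comap (LinearMap.ker (cobdry D q)).subtype (cobnd D q)) := by
    intro x hx
    obtain ⟨w, hw⟩ := Submodule.mem_comap.1 hx
    refine Submodule.mem_comap.2 (Submodule.mem_comap.2 ?_)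
    show Fmap hv hLω p q x.1 ∈ cobnd D q
    rw [show (x : chainsOf L p) = bdry L p w from hw.symm]
    exact lemF2 hv hLω hLsub hDω hdual hpq w
  have hGM : Submodule.comap (LinearMap.ker (cobdry D q)).subtype (cobnd D q)
      ≤ Submodule.comap Gc
        (Submodule.comap (cyc L p).subtype (LinearMap.range (bdry L p))) := by
    intro x hx
    refine Submodule.mem_comap.2 (Submodule.mem_comap.2 ?_)
    show Gmap hLω p q x.1 ∈ LinearMap.range (bdry L p)
    exact lemG2 hv hLω hLsub hDω hdual hpq (Submodule.mem_comap.1 hx)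
  let Fq := Submodule.mapQ _ _ Fc hFN
  let Gq := Submodule.mapQ _ _ Gc hGM
  refine ⟨LinearEquiv.ofLinear Fq Gq ?_ ?_⟩
  · refine LinearMap.ext fun x => ?_
    obtain ⟨y, rfl⟩ := Submodule.Quotient.mk_surjective _ x
    rw [LinearMap.comp_apply, LinearMap.id_apply]
    show Submodule.Quotient.mk (Fc (Gc y)) = Submodule.Quotient.mk y
    rw [Submodule.Quotient.eq]
    refine Submodule.mem_comap.2 ?_
    rw [map_sub]
    show Fmap hv hLω p q (Gmap hLω p q y.1) - y.1 ∈ cobnd D q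
    exact lemFG hv hLω hLsub hDω hdual hpq (LinearMap.mem_ker.1 y.2)
  · refine LinearMap.ext fun x => ?_
    obtain ⟨y, rfl⟩ := Submodule.Quotient.mk_surjective _ x
    rw [LinearMap.comp_apply, LinearMap.id_apply]
    show Submodule.Quotient.mk (Gc (Fc y)) = Submodule.Quotient.mk y
    rw [Submodule.Quotient.eq]
    refine Submodule.mem_comap.2 ?_
    rw [map_sub]
    show Gmap (D := D) hLω p q (Fmap hv hLω p q y.1) - y.1 ∈ LinearMap.range (bdry L p)
    exact lemGF hv hLω hLsub hDω hdual hpq y.2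

end Assemble
end AD

/-- Combinatorial Alexander duality with links: for a simplicial complex `K`
on `[m]` and disjoint `σ, ω ⊆ [m]` with `ω ≠ ∅`,
`H̃_{p-1}(K_{σ,ω}) ≅ H̃^{|ω|-p-2}((K°)_{σ̃,ω})` for all degrees
(in shifted indexing: degrees `p, q` with `p + q + 1 = |ω|`), where
`σ̃ = [m] \ (σ ∪ ω)`. -/
theorem alexander_duality_lkr (m : ℕ) (K : Set (Finset (Fin m)))
    (hK : IsComplex K) (σ ω : Finset (Fin m)) (hd : Disjoint σ ω)
    (hω : ω.Nonempty) :
    ∀ p q : ℕ, p + q + 1 = ω.card →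
      Nonempty (Hgrp (lkr K σ ω) p ≃ₗ[ℤ]
        coHgrp (lkr (dualC Finset.univ K) (Finset.univ \ (σ ∪ ω)) ω) q) := by
  intro p q hpq
  obtain ⟨v, hv⟩ := hω
  set L := lkr K σ ω with hL
  set D := lkr (dualC Finset.univ K) (Finset.univ \ (σ ∪ ω)) ω with hD
  have hLω : ∀ s, s ∈ L → s ∈ AD.SetΔ ω := fun s hs => hs.1
  have hLsub : ∀ s, s ∈ L → ∀ t, t ⊆ s → t ∈ L := fun s hs t ht =>
    ⟨ht.trans hs.1, hK _ hs.2 _ (Finset.union_subset_union_right ht)⟩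
  have hDω : ∀ η, η ∈ D → η ⊆ ω := fun η hη => hη.1
  have hdual : ∀ τ η : Finset (Fin m), τ ⊆ ω → (∀ x, x ∈ η ↔ (x ∈ ω ∧ x ∉ τ)) →
      (τ ∈ D ↔ ¬ η ∈ L) := by
    intro τ η hτ hη
    have hηω : η ⊆ ω := fun x hx => ((hη x).1 hx).1
    have hcomp : (Finset.univ \ (σ ∪ ω)) ∪ τ = Finset.univ \ (σ ∪ η) := by
      ext x
      have h1 : x ∈ τ → x ∈ ω := fun h => hτ h
      have h2 : x ∈ σ → x ∉ ω := fun hs hw => Finset.disjoint_left.1 hd hs hw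
      have h3 := hη x
      simp only [Finset.mem_union, Finset.mem_sdiff, Finset.mem_univ, true_and]
      by_cases hxτ : x ∈ τ <;> by_cases hxσ : x ∈ σ <;> by_cases hxω : x ∈ ω <;> tauto
    constructor
    · rintro ⟨hτω, s, hsu, hsK, heq⟩ hLmem
      rw [hcomp] at heq
      have hseq := congrArg (fun t => Finset.univ \ t) heq
      simp only [Finset.sdiff_sdiff_eq_self (Finset.subset_univ _)] at hseq
      refine hsK ?_
      rw [← hseq]
      exact hLmem.2
    · intro hnL
      exact ⟨hτ, σ ∪ η, Finset.subset_univ _,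
        fun hmem => hnL ⟨hηω, hmem⟩, hcomp⟩
  exact AD.main_equiv hv hLω hLsub hDω hdual hpq
end
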